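/- Every two-qubit density matrix ρ admits an optimal decomposition in which every pure state has the same concurrence, equal to the concurrence of assistance: there exists a finite family of nonzero vectors χ_k : Fin 2 → Fin 2 → ℂ with ρ((i,j),(i',j')) = ∑_k χ_k i j · conj(χ_k i' j') such that for every k, the normalized concurrence satisfies 2·|χ_k 0 0 · χ_k 1 1 − χ_k 0 1 · χ_k 1 0| / ‖χ_k‖² = Tr R(ρ) (so in particular ∑_k 2·|χ_k 0 0 · χ_k 1 1 − χ_k 0 1 · χ_k 1 0| = Tr R(ρ)). -/

import Mathlib

open Matrix Complex Kronecker Finset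
open scoped ComplexOrder

noncomputable section

abbrev TwoQubitMat := Matrix (Fin 2 × Fin 2) (Fin 2 × Fin 2) ℂ

def sigmaY : Matrix (Fin 2) (Fin 2) ℂ := !![0, -Complex.I; Complex.I, 0]

def spinFlip (ρ : TwoQubitMat) : TwoQubitMat :=
  (sigmaY ⊗ₖ sigmaY) * ρ.map (starRingEnd ℂ) * (sigmaY ⊗ₖ sigmaY)

def matSqrt {m : Type*} [Fintype m] [DecidableEq m] (M : Matrix m m ℂ) : Matrix m m ℂ :=
  open scoped Classical in
  if h : M.PosSemidef then
    h.1.eigenvectorUnitary.1 * diagonal ((↑) ∘ (h.1.eigenvalues · |>.sqrt)) *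
      (star h.1.eigenvectorUnitary : Matrix m m ℂ)
  else 0

def Rmat (ρ : TwoQubitMat) : TwoQubitMat :=
  matSqrt (matSqrt ρ * spinFlip ρ * matSqrt ρ)

def CoA (ρ : TwoQubitMat) : ℝ := (Rmat ρ).trace.re

def lmin2 (M : Matrix (Fin 2) (Fin 2) ℂ) : ℝ :=
  if h : M.IsHermitian then min (h.eigenvalues 0) (h.eigenvalues 1) else 0

def maxEig4 (M : TwoQubitMat) : ℝ :=
  if h : M.IsHermitian then Finset.univ.sup' Finset.univ_nonempty h.eigenvalues else 0

def Conc (ρ : TwoQubitMat) : ℝ := max 0 (2 * maxEig4 (Rmat ρ) - (Rmat ρ).trace.re)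

def eigMultiset (M : TwoQubitMat) : Multiset ℝ :=
  if h : M.IsHermitian then Finset.univ.val.map h.eigenvalues else 0

def rhoAB (ψ : Fin 2 → Fin 2 → Fin 2 → ℂ) : TwoQubitMat :=
  fun p q => ∑ l, ψ p.1 p.2 l * (starRingEnd ℂ) (ψ q.1 q.2 l)

def rhoAS (ψ : Fin 2 → Fin 2 → Fin 2 → ℂ) : TwoQubitMat :=
  fun p q => ∑ j, ψ p.1 j p.2 * (starRingEnd ℂ) (ψ q.1 j q.2)

def rhoA (ψ : Fin 2 → Fin 2 → Fin 2 → ℂ) : Matrix (Fin 2) (Fin 2) ℂ :=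
  fun i i' => ∑ j, ∑ l, ψ i j l * (starRingEnd ℂ) (ψ i' j l)

/-- Concurrence of a (possibly unnormalized) two-qubit vector. -/
def conc2 (φ : Fin 2 → Fin 2 → ℂ) : ℝ :=
  2 * ‖φ 0 0 * φ 1 1 - φ 0 1 * φ 1 0‖

/-!
Write `F = σy ⊗ σy` and `S = √ρ`. The matrix `Sᵀ F S` is complex symmetric, so Takagi's
factorization gives a unitary `U` with `Uᵀ (Sᵀ F S) U = D` diagonal and nonnegative; then
`R(ρ) = U D Uᴴ`, so `C_a(ρ) = Tr D`. The columns of `X = S U` decompose `ρ`, and the concurrence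
of the `k`-th column is `|(Xᵀ F X)ₖₖ|`. A real orthogonal change `X ↦ X O` keeps `X Xᴴ = ρ` and
keeps `Oᵀ D O` real, so it suffices to choose `O` making the diagonal of the traceless real
symmetric matrix `Oᵀ (D - Tr D · Re (Xᴴ X)) O` vanish: diagonalize it and rotate by the `4 × 4`
Hadamard matrix, whose entries all have square `1/4`. Dropping the zero columns of `X O` gives the
decomposition.
-/

section MatSqrt

open scoped MatrixOrder

variable {m : Type*} [Fintype m] [DecidableEq m] {M : Matrix m m ℂ}

lemma matSqrt_eq_cfcSqrt (hM : M.PosSemidef) : matSqrt M = CFC.sqrt M := by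
  rw [CFC.sqrt_eq_real_sqrt M hM.nonneg, cfcₙ_eq_cfc, hM.1.cfc_eq, matSqrt, dif_pos hM]
  simp [IsHermitian.cfc, Function.comp_def]

lemma matSqrt_posSemidef (hM : M.PosSemidef) : (matSqrt M).PosSemidef := by
  rw [matSqrt_eq_cfcSqrt hM]
  exact (CFC.sqrt_nonneg M).posSemidef

lemma matSqrt_mul_self (hM : M.PosSemidef) : matSqrt M * matSqrt M = M := by
  rw [matSqrt_eq_cfcSqrt hM]
  exact CFC.sqrt_mul_sqrt_self M hM.nonneg

lemma matSqrt_eq_of_mul_self_eq {B : Matrix m m ℂ} (hB : B.PosSemidef) (h : B * B = M) :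
    matSqrt M = B := by
  have hM : M.PosSemidef := by
    rw [← h]
    nth_rewrite 1 [← hB.1.eq]
    exact posSemidef_conjTranspose_mul_self B
  rw [matSqrt_eq_cfcSqrt hM]
  exact CFC.sqrt_unique h hB.nonneg

end MatSqrt

section Takagi

variable {ι κ : Type*} [Fintype ι]

lemma Matrix.IsSymm.transpose_mul_mul {F : Matrix ι ι ℂ} (hF : F.IsSymm) (S : Matrix ι ι ℂ) :
    (Sᵀ * F * S).IsSymm := by
  rw [IsSymm, transpose_mul, transpose_mul, transpose_transpose, hF.eq, Matrix.mul_assoc]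

variable [DecidableEq ι] [Fintype κ] [DecidableEq κ]

def TakagiDiagonalizable (A : Matrix ι ι ℂ) : Prop :=
  ∃ U ∈ unitaryGroup ι ℂ, ∃ d : ι → ℝ, (∀ i, 0 ≤ d i) ∧
    Uᵀ * A * U = diagonal fun i => (d i : ℂ)

lemma takagiDiagonalizable_zero : TakagiDiagonalizable (0 : Matrix ι ι ℂ) :=
  ⟨1, one_mem _, 0, fun _ => le_rfl, by simp⟩

lemma TakagiDiagonalizable.submatrix_equiv {A : Matrix ι ι ℂ} (h : TakagiDiagonalizable A)
    (e : κ ≃ ι) : TakagiDiagonalizable (A.submatrix e e) := by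
  obtain ⟨U, hU, d, hd, hUA⟩ := h
  refine ⟨U.submatrix e e, ?_, d ∘ e, fun i => hd (e i), ?_⟩
  · rw [mem_unitaryGroup_iff', star_eq_conjTranspose, conjTranspose_submatrix,
      submatrix_mul_equiv, ← star_eq_conjTranspose, (mem_unitaryGroup_iff').mp hU,
      submatrix_one_equiv]
  · rw [transpose_submatrix, submatrix_mul_equiv, submatrix_mul_equiv, hUA,
      submatrix_diagonal_equiv]
    rfl

lemma TakagiDiagonalizable.of_transpose_mul_mul {A W : Matrix ι ι ℂ} (hW : W ∈ unitaryGroup ι ℂ)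
    (h : TakagiDiagonalizable (Wᵀ * A * W)) : TakagiDiagonalizable A := by
  obtain ⟨U, hU, d, hd, hUA⟩ := h
  refine ⟨W * U, mul_mem hW hU, d, hd, ?_⟩
  rw [← hUA, transpose_mul]
  simp only [Matrix.mul_assoc]

lemma TakagiDiagonalizable.fromBlocks_diagonal {A : Matrix κ κ ℂ} (h : TakagiDiagonalizable A)
    (c : ι → ℝ) (hc : ∀ i, 0 ≤ c i) :
    TakagiDiagonalizable (fromBlocks (diagonal fun i => (c i : ℂ)) 0 0 A) := by
  obtain ⟨U, hU, d, hd, hUA⟩ := h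
  refine ⟨fromBlocks 1 0 0 U, ?_, Sum.elim c d, fun i => ?_, ?_⟩
  · rw [mem_unitaryGroup_iff', star_eq_conjTranspose, fromBlocks_conjTranspose,
      fromBlocks_multiply, ← star_eq_conjTranspose U, (mem_unitaryGroup_iff').mp hU]
    simp
  · cases i
    exacts [hc _, hd _]
  · rw [fromBlocks_transpose, fromBlocks_multiply, fromBlocks_multiply]
    simp only [transpose_one, transpose_zero, Matrix.one_mul, Matrix.mul_one, Matrix.zero_mul,
      Matrix.mul_zero, add_zero, zero_add, hUA, Matrix.fromBlocks_diagonal]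
    congr 1
    ext i
    cases i <;> rfl

lemma exists_takagi_vector {A : Matrix ι ι ℂ} (hA : A.IsSymm) (h0 : A ≠ 0) :
    ∃ σ : ℝ, 0 < σ ∧ ∃ x : ι → ℂ, x ≠ 0 ∧ A *ᵥ x = (σ : ℂ) • star x := by
  have hM : (Aᴴ * A).PosSemidef := posSemidef_conjTranspose_mul_self A
  obtain ⟨i, hi⟩ : ∃ i, hM.1.eigenvalues i ≠ 0 := by
    by_contra! h
    exact h0 (conjTranspose_mul_self_eq_zero.mp
      (hM.1.eigenvalues_eq_zero_iff.mp (funext h)))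
  set t := hM.1.eigenvalues i
  set w : ι → ℂ := ⇑(hM.1.eigenvectorBasis i)
  have ht : 0 < t := (hM.eigenvalues_nonneg i).lt_of_ne' hi
  have hw : w ≠ 0 := (WithLp.ofLp_eq_zero 2).ne.2 (hM.1.eigenvectorBasis.orthonormal.ne_zero i)
  have hAw : Aᴴ *ᵥ (A *ᵥ w) = (t : ℂ) • w := by
    rw [mulVec_mulVec, hM.1.mulVec_eigenvectorBasis]; rfl
  have hconj : ∀ v, star (A *ᵥ v) = Aᴴ *ᵥ star v := fun v => by
    rw [star_mulVec, ← mulVec_transpose, ← conjTranspose_transpose_eq_transpose_conjTranspose,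
      hA.eq]
  have hAz : A *ᵥ star (A *ᵥ w) = (t : ℂ) • star w := by
    rw [← star_star (A *ᵥ star _), hconj, star_star, hAw, star_smul, Complex.star_def,
      Complex.conj_ofReal]
  set σ := √t
  have hσ : (σ : ℂ) * σ = t := by rw [← Complex.ofReal_mul, Real.mul_self_sqrt ht.le]
  refine ⟨σ, Real.sqrt_pos.2 ht, ?_⟩
  -- `σ • w + conj (A w)` is a Takagi vector; if it vanishes, `I • w` is one
  by_cases hx : (σ : ℂ) • w + star (A *ᵥ w) = 0
  · refine ⟨Complex.I • w, smul_ne_zero Complex.I_ne_zero hw, ?_⟩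
    have hz : A *ᵥ w = -((σ : ℂ) • star w) := by
      rw [← star_star (A *ᵥ w), eq_neg_of_add_eq_zero_right hx, star_neg, star_smul,
        Complex.star_def, Complex.conj_ofReal]
    rw [mulVec_smul, hz, star_smul, Complex.star_def, Complex.conj_I, smul_neg, smul_comm,
      neg_smul, smul_neg]
  · refine ⟨_, hx, ?_⟩
    rw [mulVec_add, mulVec_smul, hAz, star_add, star_smul, star_star, Complex.star_def,
      Complex.conj_ofReal, smul_add, smul_smul, hσ, add_comm]

lemma exists_unit_takagi_vector {A : Matrix ι ι ℂ} (hA : A.IsSymm) (h0 : A ≠ 0) :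
    ∃ σ : ℝ, 0 < σ ∧ ∃ u : ι → ℂ, ‖WithLp.toLp 2 u‖ = 1 ∧ A *ᵥ u = (σ : ℂ) • star u := by
  obtain ⟨σ, hσ, x, hx, hAx⟩ := exists_takagi_vector hA h0
  set c : ℝ := ‖WithLp.toLp 2 x‖⁻¹
  refine ⟨σ, hσ, (c : ℂ) • x, ?_, ?_⟩
  · rw [WithLp.toLp_smul, ← Complex.coe_algebraMap, algebraMap_smul]
    exact norm_smul_inv_norm ((WithLp.toLp_eq_zero 2).ne.2 hx)
  · rw [mulVec_smul, hAx, star_smul, Complex.star_def, Complex.conj_ofReal, smul_comm]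

lemma exists_unitary_col_eq (i₀ : ι) (u : ι → ℂ) (hu : ‖WithLp.toLp 2 u‖ = 1) :
    ∃ W ∈ unitaryGroup ι ℂ, ∀ p, W p i₀ = u p := by
  have hortho : Orthonormal ℂ (({i₀} : Set ι).domRestrict fun _ => WithLp.toLp 2 u) := by
    rw [orthonormal_iff_ite]
    rintro ⟨i, rfl⟩ ⟨j, rfl⟩
    simp [hu, inner_self_eq_norm_sq_to_K]
  obtain ⟨b, hb⟩ := hortho.exists_orthonormalBasis_extension_of_card_eq
    (by simp : Module.finrank ℂ (EuclideanSpace ℂ ι) = Fintype.card ι)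
  refine ⟨_, (EuclideanSpace.basisFun ι ℂ).toMatrix_orthonormalBasis_mem_unitary b, fun p => ?_⟩
  simp [Module.Basis.toMatrix_apply, hb i₀ rfl]

lemma takagiDiagonalizable_of_sum_unit
    (ih : ∀ B : Matrix ι ι ℂ, B.IsSymm → TakagiDiagonalizable B)
    {A : Matrix (Unit ⊕ ι) (Unit ⊕ ι) ℂ} (hA : A.IsSymm) : TakagiDiagonalizable A := by
  by_cases h0 : A = 0
  · exact h0 ▸ takagiDiagonalizable_zero
  obtain ⟨σ, hσ, u, hu, hAu⟩ := exists_unit_takagi_vector hA h0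
  obtain ⟨W, hW, hWu⟩ := exists_unitary_col_eq (Sum.inl ()) u hu
  refine TakagiDiagonalizable.of_transpose_mul_mul hW ?_
  have hB : (Wᵀ * A * W).IsSymm := hA.transpose_mul_mul W
  -- the first column of `W` is a Takagi vector, so it splits off as a `1 × 1` block
  have hcol : ∀ k, (Wᵀ * A * W) k (Sum.inl ()) = if Sum.inl () = k then (σ : ℂ) else 0 := by
    intro k
    have hAW : ∀ p, (A * W) p (Sum.inl ()) = σ * star (W p (Sum.inl ())) := fun p => by
      simpa [mulVec, dotProduct, mul_apply, hWu] using congrFun hAu p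
    have hWW := congrFun (congrFun ((mem_unitaryGroup_iff').mp hW) (Sum.inl ())) k
    simp only [mul_apply, star_apply, one_apply] at hWW
    calc (Wᵀ * A * W) k (Sum.inl ())
        = σ * ∑ p, star (W p (Sum.inl ())) * W p k := by
          simp only [Matrix.mul_assoc, mul_apply (M := Wᵀ), transpose_apply, hAW, Finset.mul_sum]
          exact Finset.sum_congr rfl fun p _ => by ring
      _ = _ := by rw [hWW, mul_ite, mul_one, mul_zero]
  have hblocks : Wᵀ * A * W =
      fromBlocks (diagonal fun _ => (σ : ℂ)) 0 0 (Wᵀ * A * W).toBlocks₂₂ := by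
    ext (i | i) (j | j)
    · simp [hcol]
    · simp [← hB.apply (Sum.inl i) (Sum.inr j), hcol]
    · simp [hcol]
    · rfl
  rw [hblocks]
  exact (ih _ (IsSymm.ext fun i j => hB.apply _ _)).fromBlocks_diagonal _ fun _ => hσ.le

lemma takagiDiagonalizable_fin :
    ∀ (n : ℕ) (A : Matrix (Fin n) (Fin n) ℂ), A.IsSymm → TakagiDiagonalizable A
  | 0, A, _ => Subsingleton.elim 0 A ▸ takagiDiagonalizable_zero
  | n + 1, A, hA => by
    let e : Unit ⊕ Fin n ≃ Fin (n + 1) := Fintype.equivOfCardEq (by simp [add_comm])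
    simpa using ((takagiDiagonalizable_of_sum_unit (takagiDiagonalizable_fin n)
      (hA.submatrix e)).submatrix_equiv e.symm)

theorem Matrix.IsSymm.takagiDiagonalizable {A : Matrix ι ι ℂ} (hA : A.IsSymm) :
    TakagiDiagonalizable A := by
  let e := Fintype.equivFin ι
  simpa using (takagiDiagonalizable_fin _ _ (hA.submatrix e.symm)).submatrix_equiv e

end Takagi

lemma matSqrt_conjTranspose_mul_self {ι : Type*} [Fintype ι] [DecidableEq ι]
    {A U : Matrix ι ι ℂ} (hU : U ∈ unitaryGroup ι ℂ) {d : ι → ℝ} (hd : ∀ i, 0 ≤ d i)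
    (hUA : Uᵀ * A * U = diagonal fun i => (d i : ℂ)) :
    matSqrt (Aᴴ * A) = U * diagonal (fun i => (d i : ℂ)) * Uᴴ := by
  have hD : (diagonal fun i => (d i : ℂ)).PosSemidef :=
    posSemidef_diagonal_iff.2 fun i => Complex.zero_le_real.2 (hd i)
  refine matSqrt_eq_of_mul_self_eq (hD.mul_mul_conjTranspose_same U) ?_
  have hUT : Uᵀᴴ * Uᵀ = 1 := (mem_unitaryGroup_iff').mp (transpose_mem_unitaryGroup_iff.2 hU)
  have hDD : (diagonal fun i => (d i : ℂ)) * diagonal (fun i => (d i : ℂ)) =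
      Uᴴ * (Aᴴ * A) * U :=
    calc _ = (Uᵀ * A * U)ᴴ * (Uᵀ * A * U) := by rw [hUA, hD.1.eq]
      _ = Uᴴ * Aᴴ * (Uᵀᴴ * Uᵀ) * A * U := by simp only [conjTranspose_mul, Matrix.mul_assoc]
      _ = Uᴴ * (Aᴴ * A) * U := by rw [hUT, Matrix.mul_one]; simp only [Matrix.mul_assoc]
  have hUU : U * Uᴴ = 1 := mem_unitaryGroup_iff.mp hU
  have hUU' : Uᴴ * U = 1 := (mem_unitaryGroup_iff').mp hU
  calc U * diagonal (fun i => (d i : ℂ)) * Uᴴ * (U * diagonal (fun i => (d i : ℂ)) * Uᴴ)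
      = U * (diagonal (fun i => (d i : ℂ)) * (Uᴴ * U) * diagonal fun i => (d i : ℂ)) * Uᴴ := by
        simp only [Matrix.mul_assoc]
    _ = (U * Uᴴ) * (Aᴴ * A) * (U * Uᴴ) := by
        rw [hUU', Matrix.mul_one, hDD]; simp only [Matrix.mul_assoc]
    _ = Aᴴ * A := by rw [hUU, Matrix.one_mul, Matrix.mul_one]

section ConstantDiagonal

variable {κ : Type*} [Fintype κ] [DecidableEq κ]

-- Diagonalize `H`, then rotate by a flat `W`: each diagonal entry becomes the mean eigenvalue.
lemma exists_orthogonal_diag_eq_trace_div {H W : Matrix κ κ ℝ} (hH : H.IsSymm)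
    (hW : W ∈ orthogonalGroup κ ℝ) (hflat : ∀ i j, W i j ^ 2 = (Fintype.card κ : ℝ)⁻¹) :
    ∃ O ∈ orthogonalGroup κ ℝ, ∀ j, (Oᵀ * H * O) j j = H.trace / Fintype.card κ := by
  have hH' : H.IsHermitian := isHermitian_iff_isSymm.2 hH
  set Q : Matrix κ κ ℝ := (hH'.eigenvectorUnitary : Matrix κ κ ℝ)
  have hQ : Qᵀ * H * Q = diagonal hH'.eigenvalues := by
    simpa [star_eq_conjTranspose] using hH'.conjStarAlgAut_star_eigenvectorUnitary
  refine ⟨Q * W, mul_mem hH'.eigenvectorUnitary.2 hW, fun j => ?_⟩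
  have hdiag : (Q * W)ᵀ * H * (Q * W) = Wᵀ * diagonal hH'.eigenvalues * W := by
    rw [← hQ, transpose_mul]
    simp only [Matrix.mul_assoc]
  rw [hdiag, hH'.trace_eq_sum_eigenvalues, div_eq_mul_inv, Finset.sum_mul]
  simp only [mul_apply, transpose_apply, diagonal_apply, mul_ite, mul_zero,
    Finset.sum_ite_eq', Finset.mem_univ, if_true]
  exact Finset.sum_congr rfl fun l _ => by
    simp only [RCLike.ofReal_real_eq_id, id, ← hflat l j]
    ring

lemma exists_orthogonal_trace_mul_diag_eq {P Q W : Matrix κ κ ℝ} (hP : P.IsSymm) (hQ : Q.IsSymm)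
    (hW : W ∈ orthogonalGroup κ ℝ) (hflat : ∀ i j, W i j ^ 2 = (Fintype.card κ : ℝ)⁻¹) :
    ∃ O ∈ orthogonalGroup κ ℝ, ∀ j, Q.trace * (Oᵀ * P * O) j j = P.trace * (Oᵀ * Q * O) j j := by
  obtain ⟨O, hO, hdiag⟩ :=
    exists_orthogonal_diag_eq_trace_div ((hP.smul Q.trace).sub (hQ.smul P.trace)) hW hflat
  refine ⟨O, hO, fun j => ?_⟩
  have h := hdiag j
  simp only [trace_sub, trace_smul, smul_eq_mul, mul_comm, sub_self, zero_div, Matrix.mul_sub,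
    Matrix.sub_mul, Matrix.mul_smul, Matrix.smul_mul, Matrix.sub_apply, Matrix.smul_apply] at h
  linarith

end ConstantDiagonal

def hadamard4 : Matrix (Fin 2 × Fin 2) (Fin 2 × Fin 2) ℝ :=
  (1 / 2 : ℝ) • (!![1, 1; 1, -1] ⊗ₖ !![1, 1; 1, -1])

lemma hadamard4_mem_orthogonalGroup : hadamard4 ∈ orthogonalGroup (Fin 2 × Fin 2) ℝ := by
  rw [mem_orthogonalGroup_iff']
  ext ⟨i, j⟩ ⟨k, l⟩
  fin_cases i <;> fin_cases j <;> fin_cases k <;> fin_cases l <;>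
    simp [hadamard4, mul_apply, Fintype.sum_prod_type, Fin.sum_univ_two] <;> norm_num

lemma hadamard4_sq (p q : Fin 2 × Fin 2) :
    hadamard4 p q ^ 2 = (Fintype.card (Fin 2 × Fin 2) : ℝ)⁻¹ := by
  rcases p with ⟨i, j⟩
  rcases q with ⟨k, l⟩
  fin_cases i <;> fin_cases j <;> fin_cases k <;> fin_cases l <;> simp [hadamard4] <;> norm_num

lemma sigmaY_kron_isSymm : (sigmaY ⊗ₖ sigmaY).IsSymm := by
  ext ⟨i, j⟩ ⟨k, l⟩
  fin_cases i <;> fin_cases j <;> fin_cases k <;> fin_cases l <;> simp [sigmaY]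

lemma sigmaY_kron_isHermitian : (sigmaY ⊗ₖ sigmaY).IsHermitian := by
  ext ⟨i, j⟩ ⟨k, l⟩
  fin_cases i <;> fin_cases j <;> fin_cases k <;> fin_cases l <;> simp [sigmaY]

lemma mul_spinFlip_mul_self {S : TwoQubitMat} (hS : S.IsHermitian) :
    S * spinFlip (S * S) * S =
      (Sᵀ * (sigmaY ⊗ₖ sigmaY) * S)ᴴ * (Sᵀ * (sigmaY ⊗ₖ sigmaY) * S) := by
  have hSc : S.map (starRingEnd ℂ) = Sᵀ := by
    change Sᴴᵀ = Sᵀ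
    rw [hS.eq]
  rw [spinFlip, Matrix.map_mul, hSc, conjTranspose_mul, conjTranspose_mul,
    sigmaY_kron_isHermitian.eq, conjTranspose_transpose_eq_transpose_conjTranspose, hS.eq]
  simp only [Matrix.mul_assoc]

lemma exists_takagi_factor {ρ : TwoQubitMat} (hρ : ρ.PosSemidef) :
    ∃ X : TwoQubitMat, X * Xᴴ = ρ ∧ ∃ d : Fin 2 × Fin 2 → ℝ, (∀ i, 0 ≤ d i) ∧
      Xᵀ * (sigmaY ⊗ₖ sigmaY) * X = diagonal (fun i => (d i : ℂ)) ∧ CoA ρ = ∑ i, d i := by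
  set S := matSqrt ρ
  have hS : S.IsHermitian := (matSqrt_posSemidef hρ).1
  have hSS : S * S = ρ := matSqrt_mul_self hρ
  obtain ⟨U, hU, d, hd, hUA⟩ := (sigmaY_kron_isSymm.transpose_mul_mul S).takagiDiagonalizable
  refine ⟨S * U, ?_, d, hd, ?_, ?_⟩
  · rw [conjTranspose_mul, hS.eq, Matrix.mul_assoc, ← Matrix.mul_assoc U,
      show U * Uᴴ = 1 from mem_unitaryGroup_iff.mp hU, Matrix.one_mul, hSS]
  · rw [← hUA, transpose_mul]
    simp only [Matrix.mul_assoc]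
  · have hR : Rmat ρ = matSqrt (S * spinFlip (S * S) * S) := by rw [hSS]; rfl
    rw [CoA, hR, mul_spinFlip_mul_self hS,
      matSqrt_conjTranspose_mul_self hU hd hUA, trace_mul_cycle,
      show Uᴴ * U = 1 from (mem_unitaryGroup_iff').mp hU, Matrix.one_mul, trace_diagonal]
    simp

lemma conc2_eq_norm_transpose_mul_mul {κ : Type*} [Fintype κ] (Y : Matrix (Fin 2 × Fin 2) κ ℂ)
    (k : κ) : conc2 (fun i j => Y (i, j) k) = ‖(Yᵀ * (sigmaY ⊗ₖ sigmaY) * Y) k k‖ := by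
  have h : (Yᵀ * (sigmaY ⊗ₖ sigmaY) * Y) k k =
      -2 * (Y (0, 0) k * Y (1, 1) k - Y (0, 1) k * Y (1, 0) k) := by
    simp [mul_apply, Fintype.sum_prod_type, Fin.sum_univ_two, sigmaY]
    ring
  rw [h, conc2, norm_mul, norm_neg]
  norm_num

lemma sum_normSq_eq_re_conjTranspose_mul_self {κ : Type*} [Fintype κ]
    (Y : Matrix (Fin 2 × Fin 2) κ ℂ) (k : κ) :
    ∑ i, ∑ j, Complex.normSq (Y (i, j) k) = ((Yᴴ * Y) k k).re := by
  simp [mul_apply, Fintype.sum_prod_type, Complex.normSq_apply]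

lemma re_conjTranspose_mul_mul_map_ofReal {κ : Type*} [Fintype κ] (O : Matrix κ κ ℝ)
    (M : Matrix κ κ ℂ) (j k : κ) :
    (((O.map Complex.ofRealHom)ᴴ * M * O.map Complex.ofRealHom) j k).re =
      (Oᵀ * M.map Complex.re * O) j k := by
  simp [mul_apply, Complex.re_sum, Finset.sum_mul]

lemma mul_map_ofReal_mul_conjTranspose {ι κ : Type*} [Fintype κ] [DecidableEq κ]
    (X : Matrix ι κ ℂ) {O : Matrix κ κ ℝ} (hO : O ∈ orthogonalGroup κ ℝ) :
    X * O.map Complex.ofRealHom * (X * O.map Complex.ofRealHom)ᴴ = X * Xᴴ := by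
  have hOc : (O.map Complex.ofRealHom)ᴴ = Oᵀ.map Complex.ofRealHom := by ext; simp
  rw [conjTranspose_mul, hOc, Matrix.mul_assoc, ← Matrix.mul_assoc (O.map _), ← Matrix.map_mul,
    (mem_orthogonalGroup_iff _ ℝ).mp hO, Matrix.map_one _ (map_zero _) (map_one _),
    Matrix.one_mul]

lemma exists_flat_factor {ρ : TwoQubitMat} (hρ : ρ.PosSemidef) (htr : ρ.trace = 1) :
    ∃ Y : TwoQubitMat, Y * Yᴴ = ρ ∧
      ∀ k, conc2 (fun i j => Y (i, j) k) = CoA ρ * ((Yᴴ * Y) k k).re := by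
  obtain ⟨X, hX, d, hd, hXF, hCoA⟩ := exists_takagi_factor hρ
  have hCoA0 : 0 ≤ CoA ρ := hCoA ▸ Finset.sum_nonneg fun i _ => hd i
  set Q := (Xᴴ * X).map Complex.re
  have hQ : Q.IsSymm := IsSymm.ext fun i j => by
    simp [Q, ← (isHermitian_conjTranspose_mul_self X).apply i j]
  have hQtr : Q.trace = 1 := by
    have h : (Xᴴ * X).trace = 1 := by rw [trace_mul_comm, hX, htr]
    calc Q.trace = ((Xᴴ * X).trace).re := by simp [Q, trace, Complex.re_sum]
      _ = 1 := by rw [h, Complex.one_re]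
  obtain ⟨O, hO, hOdiag⟩ := exists_orthogonal_trace_mul_diag_eq (isSymm_diagonal d) hQ
    hadamard4_mem_orthogonalGroup hadamard4_sq
  set Oc := O.map Complex.ofRealHom
  refine ⟨X * Oc, by rw [mul_map_ofReal_mul_conjTranspose X hO, hX], fun k => ?_⟩
  have hnrm : (((X * Oc)ᴴ * (X * Oc)) k k).re = (Oᵀ * Q * O) k k := by
    rw [← re_conjTranspose_mul_mul_map_ofReal, conjTranspose_mul]
    simp only [Matrix.mul_assoc, Oc]
  have hconc : (X * Oc)ᵀ * (sigmaY ⊗ₖ sigmaY) * (X * Oc) =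
      (Oᵀ * diagonal d * O).map Complex.ofRealHom := by
    have hD : (diagonal fun i => (d i : ℂ)) = (diagonal d).map Complex.ofRealHom :=
      (diagonal_map (map_zero Complex.ofRealHom)).symm
    rw [Matrix.map_mul, Matrix.map_mul, transpose_map, ← hD, ← hXF, transpose_mul]
    simp only [Matrix.mul_assoc, Oc]
  have hflat := hOdiag k
  rw [hQtr, trace_diagonal, ← hCoA, one_mul] at hflat
  have hnonneg : 0 ≤ (Oᵀ * Q * O) k k := by
    rw [← hnrm, ← sum_normSq_eq_re_conjTranspose_mul_self]
    exact Finset.sum_nonneg fun _ _ => Finset.sum_nonneg fun _ _ => Complex.normSq_nonneg _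
  rw [conc2_eq_norm_transpose_mul_mul, hconc, map_apply, Complex.ofRealHom_eq_coe,
    Complex.norm_real, hflat, hnrm, Real.norm_eq_abs, abs_of_nonneg (mul_nonneg hCoA0 hnonneg)]

lemma exists_enum_ne_zero {κ V : Type*} [Fintype κ] [Zero V] (y : κ → V) :
    ∃ (n : ℕ) (e : Fin n → κ), (∀ m, y (e m) ≠ 0) ∧
      ∀ {M : Type*} [AddCommMonoid M] (f : κ → M), (∀ k, y k = 0 → f k = 0) →
        ∑ m, f (e m) = ∑ k, f k := by
  classical
  set s := Finset.univ.filter fun k => y k ≠ 0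
  refine ⟨s.card, fun m => s.equivFin.symm m,
    fun m => (Finset.mem_filter.1 (s.equivFin.symm m).2).2, fun f hf => ?_⟩
  rw [Equiv.sum_comp s.equivFin.symm (fun k => f k), Finset.sum_coe_sort]
  exact Finset.sum_filter_of_ne fun k _ hk => fun h0 => hk (hf k h0)

lemma exists_decomposition_of_factor {κ : Type*} [Fintype κ] {ρ : TwoQubitMat}
    (Y : Matrix (Fin 2 × Fin 2) κ ℂ) (c : ℝ) (hY : Y * Yᴴ = ρ) (htr : ρ.trace = 1)
    (hconc : ∀ k, conc2 (fun i j => Y (i, j) k) = c * ((Yᴴ * Y) k k).re) :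
    ∃ (n : ℕ) (χ : Fin n → Fin 2 → Fin 2 → ℂ),
      (∀ k, χ k ≠ 0) ∧
      (∀ i j i' j' : Fin 2,
        ρ (i, j) (i', j') = ∑ k, χ k i j * (starRingEnd ℂ) (χ k i' j')) ∧
      (∀ k, conc2 (χ k) / (∑ i, ∑ j, Complex.normSq (χ k i j)) = c) ∧
      ∑ k, conc2 (χ k) = c := by
  set y : κ → Fin 2 → Fin 2 → ℂ := fun k i j => Y (i, j) k
  have hnrm : ∀ k, ∑ i, ∑ j, Complex.normSq (y k i j) = ((Yᴴ * Y) k k).re :=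
    sum_normSq_eq_re_conjTranspose_mul_self Y
  obtain ⟨n, e, hne, hsum⟩ := exists_enum_ne_zero y
  refine ⟨n, fun m => y (e m), hne, fun i j i' j' => ?_, fun m => ?_, ?_⟩
  · rw [hsum (fun k => y k i j * (starRingEnd ℂ) (y k i' j')) fun k hk => by simp [hk], ← hY]
    simp [mul_apply, y]
  · have hpos : 0 < ((Yᴴ * Y) (e m) (e m)).re := by
      obtain ⟨i, hi⟩ := Function.ne_iff.1 (hne m)
      obtain ⟨j, hj⟩ := Function.ne_iff.1 hi
      rw [← hnrm]
      exact Finset.sum_pos' (fun _ _ => Finset.sum_nonneg fun _ _ => Complex.normSq_nonneg _)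
        ⟨i, Finset.mem_univ _, Finset.sum_pos' (fun _ _ => Complex.normSq_nonneg _)
          ⟨j, Finset.mem_univ _, Complex.normSq_pos.2 hj⟩⟩
    rw [hconc, hnrm, mul_div_cancel_right₀ _ hpos.ne']
  · rw [hsum (fun k => conc2 (y k)) fun k hk => by simp [hk, conc2]]
    simp only [y, hconc, ← Finset.mul_sum, ← Complex.re_sum]
    change c * (Yᴴ * Y).trace.re = c
    rw [trace_mul_comm, hY, htr, Complex.one_re, mul_one]

theorem exists_optimal_flat_decomposition (ρ : TwoQubitMat)
    (hpsd : ρ.PosSemidef) (htr : ρ.trace = 1) :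
    ∃ (n : ℕ) (χ : Fin n → Fin 2 → Fin 2 → ℂ),
      (∀ k, χ k ≠ 0) ∧
      (∀ i j i' j' : Fin 2,
        ρ (i, j) (i', j') = ∑ k, χ k i j * (starRingEnd ℂ) (χ k i' j')) ∧
      (∀ k, conc2 (χ k) / (∑ i, ∑ j, Complex.normSq (χ k i j)) = CoA ρ) ∧
      ∑ k, conc2 (χ k) = CoA ρ := by
  obtain ⟨Y, hY, hconc⟩ := exists_flat_factor hpsd htr
  exact exists_decomposition_of_factor Y (CoA ρ) hY htr hconc
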